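/- Assume the domain D ⊆ ℝ^d satisfies condition (A) with constant r₀ > 0 and condition (B) with constants δ > 0, β ≥ 1, and set γ = 2 r₀ β^{−1}. Then there exists a constant K > 0 such that for every z₀ ∈ ∂D there exists a C² function f : ℝ^d → ℝ with sup-norms of f, Df, D²f bounded by K, satisfying ⟨y − x, n⟩ + (1/γ) ⟨(Df)(x), n⟩ |y − x|² ≥ 0 for every x ∈ B(z₀, δ) ∩ ∂D, every y ∈ cl(D), and every n ∈ N_x. -/

import Mathlib

/-!
Take `f x = (1 + δ²) arctan ⟪l, x - z₀⟫`, where `l` is the direction given by condition (B)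
at `z₀`. Its gradient is `l` times a factor `(1 + δ²) / (1 + ⟪l, x - z₀⟫²) ≥ 1` on `B(z₀, δ)`,
so `⟪∇f x, n⟫ ≥ 1/β` there. By condition (A) the ball `B(x - r₀ n, r₀)` misses `D`, hence
`2 r₀ ⟪y - x, n⟫ + ‖y - x‖² ≥ 0` for `y ∈ cl D`; since `1/γ = β / (2 r₀)`, the two bounds combine.
-/

open MeasureTheory ProbabilityTheory Set RealInnerProductSpace

noncomputable section

/-- `d`-dimensional Euclidean space. -/
abbrev Euc (d : ℕ) := EuclideanSpace ℝ (Fin d)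

/-- The set `N_{x,r}` of inward unit normal vectors at `x` with radius `r`:
`{n : ‖n‖ = 1, B(x - r n, r) ∩ D = ∅}`. -/
def normalSet {d : ℕ} (D : Set (Euc d)) (x : Euc d) (r : ℝ) : Set (Euc d) :=
  {n | ‖n‖ = 1 ∧ Metric.ball (x - r • n) r ∩ D = ∅}

/-- The set `N_x = ⋃_{r>0} N_{x,r}` of inward unit normal vectors at `x`. -/
def normalCone {d : ℕ} (D : Set (Euc d)) (x : Euc d) : Set (Euc d) :=
  ⋃ r > 0, normalSet D x r

/-- Condition (A) with constant `r₀`. -/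
def CondA {d : ℕ} (D : Set (Euc d)) (r₀ : ℝ) : Prop :=
  ∀ x ∈ frontier D, normalCone D x = normalSet D x r₀ ∧ (normalSet D x r₀).Nonempty

/-- Condition (B) with constants `δ`, `β`. -/
def CondB {d : ℕ} (D : Set (Euc d)) (δ β : ℝ) : Prop :=
  ∀ x ∈ frontier D, ∃ l : Euc d, ‖l‖ = 1 ∧
    ∀ y ∈ Metric.ball x δ ∩ frontier D, ∀ n ∈ normalCone D y, 1 / β ≤ ⟪l, n⟫

section ArctanRidge

variable {E : Type*} [NormedAddCommGroup E] [InnerProductSpace ℝ E]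

def arctanRidge (l z : E) (c : ℝ) (x : E) : ℝ := c * Real.arctan ⟪l, x - z⟫

variable (l z : E) (c : ℝ)

theorem hasFDerivAt_inner_sub (x : E) : HasFDerivAt (fun y => ⟪l, y - z⟫) (innerSL ℝ l) x :=
  (innerSL ℝ l).hasFDerivAt.comp x ((hasFDerivAt_id x).sub_const z)

theorem hasFDerivAt_arctanRidge (x : E) :
    HasFDerivAt (arctanRidge l z c) ((c / (1 + ⟪l, x - z⟫ ^ 2)) • innerSL ℝ l) x := by
  rw [div_eq_mul_inv]
  exact ((Real.hasDerivAt_arctan' _).const_mul c).comp_hasFDerivAt x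
    (hasFDerivAt_inner_sub l z x)

theorem fderiv_arctanRidge :
    fderiv ℝ (arctanRidge l z c) = fun x => (c / (1 + ⟪l, x - z⟫ ^ 2)) • innerSL ℝ l :=
  funext fun x => (hasFDerivAt_arctanRidge l z c x).fderiv

theorem gradient_arctanRidge [CompleteSpace E] (x : E) :
    gradient (arctanRidge l z c) x = (c / (1 + ⟪l, x - z⟫ ^ 2)) • l := by
  refine HasGradientAt.gradient ?_
  rw [hasGradientAt_iff_hasFDerivAt, map_smul]
  exact hasFDerivAt_arctanRidge l z c x

theorem hasFDerivAt_fderiv_arctanRidge (x : E) :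
    HasFDerivAt (fderiv ℝ (arctanRidge l z c))
      (((-(c * (2 * ⟪l, x - z⟫)) / (1 + ⟪l, x - z⟫ ^ 2) ^ 2) • innerSL ℝ l).smulRight
        (innerSL ℝ l)) x := by
  have hcoeff : HasDerivAt (fun t : ℝ => c / (1 + t ^ 2))
      (-(c * (2 * ⟪l, x - z⟫)) / (1 + ⟪l, x - z⟫ ^ 2) ^ 2) ⟪l, x - z⟫ := by
    have hden : HasDerivAt (fun t : ℝ => 1 + t ^ 2) (2 * ⟪l, x - z⟫) ⟪l, x - z⟫ := by
      simpa using (hasDerivAt_pow 2 ⟪l, x - z⟫).const_add 1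
    simpa only [zero_mul, zero_sub] using (hasDerivAt_const _ c).fun_div hden (by positivity)
  rw [fderiv_arctanRidge]
  exact (hcoeff.comp_hasFDerivAt x (hasFDerivAt_inner_sub l z x)).smul_const (innerSL ℝ l)

theorem contDiff_arctanRidge {n : WithTop ℕ∞} : ContDiff ℝ n (arctanRidge l z c) :=
  contDiff_const.mul (Real.contDiff_arctan.comp ((innerSL ℝ l).contDiff.comp
    (contDiff_id.sub contDiff_const)))

variable {l z c}

theorem abs_arctanRidge_le (hc : 0 ≤ c) (x : E) :
    |arctanRidge l z c x| ≤ c * (Real.pi / 2) := by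
  have harctan : |Real.arctan ⟪l, x - z⟫| ≤ Real.pi / 2 :=
    abs_le.2 ⟨(Real.neg_pi_div_two_lt_arctan _).le, (Real.arctan_lt_pi_div_two _).le⟩
  rw [arctanRidge, abs_mul, abs_of_nonneg hc]
  exact mul_le_mul_of_nonneg_left harctan hc

theorem norm_fderiv_arctanRidge_le (hc : 0 ≤ c) (hl : ‖l‖ ≤ 1) (x : E) :
    ‖fderiv ℝ (arctanRidge l z c) x‖ ≤ c := by
  have hcoeff : c / (1 + ⟪l, x - z⟫ ^ 2) ≤ c := div_le_self hc (by nlinarith)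
  rw [fderiv_arctanRidge, norm_smul, innerSL_apply_norm, Real.norm_of_nonneg (by positivity)]
  exact (mul_le_of_le_one_right (by positivity) hl).trans hcoeff

theorem norm_fderiv_fderiv_arctanRidge_le (hc : 0 ≤ c) (hl : ‖l‖ ≤ 1) (x : E) :
    ‖fderiv ℝ (fderiv ℝ (arctanRidge l z c)) x‖ ≤ c := by
  set t := ⟪l, x - z⟫
  have hcoeff : |-(c * (2 * t)) / (1 + t ^ 2) ^ 2| ≤ c := by
    have htwo : |2 * t| ≤ 1 + t ^ 2 := by
      rw [abs_le]; constructor <;> nlinarith [sq_nonneg (t + 1), sq_nonneg (t - 1)]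
    rw [abs_div, abs_neg, abs_mul, abs_of_nonneg hc,
      abs_of_pos (by positivity : (0 : ℝ) < (1 + t ^ 2) ^ 2),
      div_le_iff₀ (by positivity)]
    calc c * |2 * t| ≤ c * (1 + t ^ 2) := mul_le_mul_of_nonneg_left htwo hc
      _ ≤ c * (1 + t ^ 2) ^ 2 := mul_le_mul_of_nonneg_left (by nlinarith [sq_nonneg t]) hc
  rw [(hasFDerivAt_fderiv_arctanRidge l z c x).fderiv, ContinuousLinearMap.norm_smulRight_apply,
    norm_smul, innerSL_apply_norm, Real.norm_eq_abs]
  calc |-(c * (2 * t)) / (1 + t ^ 2) ^ 2| * ‖l‖ * ‖l‖ ≤ c * 1 * 1 := by gcongr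
    _ = c := by ring

theorem le_inner_gradient_arctanRidge [CompleteSpace E] {x n : E} {δ : ℝ} (hl : ‖l‖ ≤ 1)
    (hx : dist x z ≤ δ) (hn : 0 ≤ ⟪l, n⟫) :
    ⟪l, n⟫ ≤ ⟪gradient (arctanRidge l z (1 + δ ^ 2)) x, n⟫ := by
  have ht : |⟪l, x - z⟫| ≤ δ :=
    calc |⟪l, x - z⟫| ≤ ‖l‖ * ‖x - z‖ := abs_real_inner_le_norm l (x - z)
      _ ≤ 1 * dist x z := by rw [dist_eq_norm]; gcongr
      _ ≤ δ := by rw [one_mul]; exact hx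
  have hcoeff : 1 ≤ (1 + δ ^ 2) / (1 + ⟪l, x - z⟫ ^ 2) := by
    rw [one_le_div (by positivity)]
    nlinarith [sq_abs ⟪l, x - z⟫, abs_nonneg ⟪l, x - z⟫]
  rw [gradient_arctanRidge, real_inner_smul_left]
  exact le_mul_of_one_le_left hn hcoeff

end ArctanRidge

theorem two_mul_inner_add_sq_norm_nonneg_of_mem_normalSet {d : ℕ} {D : Set (Euc d)}
    {x y n : Euc d} {r : ℝ} (hr : 0 ≤ r) (hn : n ∈ normalSet D x r) (hy : y ∈ closure D) :
    0 ≤ 2 * r * ⟪y - x, n⟫ + ‖y - x‖ ^ 2 := by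
  obtain ⟨hn_norm, hball⟩ := hn
  have hy_ball : y ∉ Metric.ball (x - r • n) r := fun hyb => by
    simpa [hball] using Metric.isOpen_ball.inter_closure ⟨hyb, hy⟩
  have hr_le : r ≤ ‖(y - x) + r • n‖ := by
    rw [Metric.mem_ball, dist_eq_norm, not_lt] at hy_ball
    rwa [sub_sub_eq_add_sub, add_sub_right_comm] at hy_ball
  have hsq := pow_le_pow_left₀ hr hr_le 2
  rw [norm_add_sq_real, real_inner_smul_right, norm_smul, Real.norm_of_nonneg hr, hn_norm] at hsq
  nlinarith

theorem stmt9_general {d : ℕ} (D : Set (Euc d))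
    (r₀ δ β : ℝ) (hr₀ : 0 < r₀) (hβ : 1 ≤ β)
    (hA : CondA D r₀) (hB : CondB D δ β) (γ : ℝ) (hγ : γ = 2 * r₀ * β⁻¹) :
    ∃ K > 0, ∀ z₀ ∈ frontier D, ∃ f : Euc d → ℝ,
      ContDiff ℝ 2 f ∧
      (∀ x, |f x| ≤ K ∧ ‖fderiv ℝ f x‖ ≤ K ∧ ‖fderiv ℝ (fderiv ℝ f) x‖ ≤ K) ∧
      ∀ x ∈ Metric.ball z₀ δ ∩ frontier D, ∀ y ∈ closure D, ∀ n ∈ normalCone D x,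
        0 ≤ ⟪y - x, n⟫ + (1 / γ) * ⟪gradient f x, n⟫ * ‖y - x‖ ^ 2 := by
  have hc : 0 ≤ 1 + δ ^ 2 := by positivity
  refine ⟨2 * (1 + δ ^ 2), by positivity, fun z₀ hz₀ => ?_⟩
  obtain ⟨l, hl, hlB⟩ := hB z₀ hz₀
  refine ⟨arctanRidge l z₀ (1 + δ ^ 2), contDiff_arctanRidge l z₀ _, fun x => ⟨?_, ?_, ?_⟩, ?_⟩
  · nlinarith [abs_arctanRidge_le (l := l) (z := z₀) hc x, Real.pi_div_two_le_two]
  · linarith [norm_fderiv_arctanRidge_le (z := z₀) hc hl.le x]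
  · linarith [norm_fderiv_fderiv_arctanRidge_le (z := z₀) hc hl.le x]
  rintro x ⟨hxz, hx⟩ y hy n hn
  have hβn : 1 / β ≤ ⟪l, n⟫ := hlB x ⟨hxz, hx⟩ n hn
  have hgrad := le_inner_gradient_arctanRidge hl.le (Metric.mem_ball.1 hxz).le
    (hβn.trans' (by positivity))
  have hgeo := two_mul_inner_add_sq_norm_nonneg_of_mem_normalSet hr₀.le ((hA x hx).1 ▸ hn) hy
  have hβgrad : 1 ≤ β * ⟪gradient (arctanRidge l z₀ (1 + δ ^ 2)) x, n⟫ :=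
    (div_le_iff₀' (by positivity)).1 (hβn.trans hgrad)
  rw [hγ]
  field_simp
  nlinarith [mul_le_mul_of_nonneg_right hβgrad (sq_nonneg ‖y - x‖)]

/-- under conditions (A) and (B), with `γ = 2 r₀ β⁻¹`, there is a constant
`K > 0` such that each `z₀ ∈ ∂D` admits a `C²` function `f` with `f`, `Df`, `D²f` bounded
by `K` and `⟨y − x, n⟩ + (1/γ)⟨(Df)(x), n⟩ |y − x|² ≥ 0` for all `x ∈ B(z₀,δ) ∩ ∂D`,
`y ∈ cl(D)`, `n ∈ N_x`. -/
theorem stmt9 {d : ℕ} (D : Set (Euc d)) (hDopen : IsOpen D) (hDconn : IsConnected D)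
    (r₀ δ β : ℝ) (hr₀ : 0 < r₀) (hδ : 0 < δ) (hβ : 1 ≤ β)
    (hA : CondA D r₀) (hB : CondB D δ β) (γ : ℝ) (hγ : γ = 2 * r₀ * β⁻¹) :
    ∃ K > 0, ∀ z₀ ∈ frontier D, ∃ f : Euc d → ℝ,
      ContDiff ℝ 2 f ∧
      (∀ x, |f x| ≤ K ∧ ‖fderiv ℝ f x‖ ≤ K ∧ ‖fderiv ℝ (fderiv ℝ f) x‖ ≤ K) ∧
      ∀ x ∈ Metric.ball z₀ δ ∩ frontier D, ∀ y ∈ closure D, ∀ n ∈ normalCone D x,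
        0 ≤ ⟪y - x, n⟫ + (1 / γ) * ⟪gradient f x, n⟫ * ‖y - x‖ ^ 2 :=
  stmt9_general D r₀ δ β hr₀ hβ hA hB γ hγ

end
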